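/- arXiv:2501.00671 — 2 statements merged into one kernel-verified Lean document; each statement's English description precedes it below -/
import Mathlib

section
/- Let $X_1,\ldots,X_{d+2}$ be i.i.d. random points in $\mathbb{R}^d$ with an absolutely continuous distribution $\mu$. Then the probability that their convex hull is a simplex (i.e., has exactly $d+1$ vertices) equals $(d+2)\cdot \mathbb{E}[\mu([X_1,\ldots,X_{d+1}])]$. -/
open MeasureTheory Metric

noncomputable section

/-- `ℝ^d` as a Euclidean space. -/
abbrev E (d : ℕ) := EuclideanSpace ℝ (Fin d)

/-- The positive hull `pos(v_1, …, v_k)` of finitely many vectors. -/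
def posHull {m k : ℕ} (v : Fin k → E m) : Set (E m) :=
  {x | ∃ c : Fin k → ℝ, (∀ i, 0 ≤ c i) ∧ x = ∑ i, c i • v i}

/-- The normalized solid angle of a cone `C`: the proportion of the unit ball of the
linear hull of `C` occupied by `C` (computed via an orthonormal coordinate system on
the linear hull, under which Lebesgue measure on the linear hull corresponds to
Lebesgue measure on a Euclidean space). -/
def solidAngle {m : ℕ} (C : Set (E m)) : ℝ :=
  let L := Submodule.span ℝ C
  let b := stdOrthonormalBasis ℝ L
  (volume ((fun x : L => (b.repr x : E (Module.finrank ℝ L))) ''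
      {x : L | (x : E m) ∈ C} ∩ ball 0 1) /
    volume (ball (0 : E (Module.finrank ℝ L)) 1)).toReal

/-- The standard Gaussian distribution on `ℝ^d`. -/
def stdGaussian (d : ℕ) : Measure (E d) :=
  Measure.map (MeasurableEquiv.toLp 2 (Fin d → ℝ))
    (Measure.pi fun _ : Fin d => ProbabilityTheory.gaussianReal 0 1)

/-- The event that the convex hull of `d+2` points in `ℝ^d` (in general affine position)
is a simplex: one of the points lies in the convex hull of the others. -/
def simplexEvent {d : ℕ} (x : Fin (d + 2) → E d) : Prop :=
  ∃ i, x i ∈ convexHull ℝ (x '' {i}ᶜ)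

/-- The uniform probability distribution on the unit sphere `S^{d-1} ⊂ ℝ^d`,
as the normalized `(d-1)`-dimensional Hausdorff measure on the sphere. -/
def uniformSphere (d : ℕ) : Measure (E d) :=
  ((μH[(d : ℝ) - 1] (sphere (0 : E d) 1))⁻¹ • μH[(d : ℝ) - 1]).restrict (sphere (0 : E d) 1)

/-- The beta distribution `μ_{d,β}` on `ℝ^d`, with density
`c_{d,β} (1-‖x‖²)^β 𝟙_{‖x‖<1}` for `β > -1`, and interpreted as the uniform
distribution on the unit sphere for `β = -1`. -/
def betaM (d : ℕ) (β : ℝ) : Measure (E d) :=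
  if β = -1 then uniformSphere d
  else volume.withDensity fun x =>
    if ‖x‖ < 1 then
      ENNReal.ofReal ((Real.Gamma (d / 2 + β + 1) / (Real.pi ^ ((d : ℝ) / 2) * Real.Gamma (β + 1)))
        * (1 - ‖x‖ ^ 2) ^ β) else 0

/-- The beta prime distribution `μ̃_{d,β}` on `ℝ^d` (for `β > d/2`), with density
`c̃_{d,β} (1+‖x‖²)^{-β}`. -/
def betaPrimeM (d : ℕ) (β : ℝ) : Measure (E d) :=
  volume.withDensity fun x =>
    ENNReal.ofReal ((Real.Gamma β / (Real.pi ^ ((d : ℝ) / 2) * Real.Gamma (β - d / 2)))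
      * (1 + ‖x‖ ^ 2) ^ (-β))

/-- The uniform distribution on the unit ball of `ℝ^d`. -/
def uniformBall (d : ℕ) : Measure (E d) :=
  (volume (ball (0 : E d) 1))⁻¹ • volume.restrict (ball (0 : E d) 1)

/-- `𝕁_{m+1,1}(∞)`: the sum of the internal solid angles at the vertices of the regular
`m`-dimensional simplex `[e_1, …, e_{m+1}] ⊂ ℝ^{m+1}`. -/
def Jinf (m : ℕ) : ℝ :=
  (m + 1) * solidAngle (posHull fun j : Fin m =>
    (EuclideanSpace.single j.succ (1 : ℝ) - EuclideanSpace.single 0 1 : E (m + 1)))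

/-- The entire extension of the standard normal CDF, via its power series. -/
def PhiC (z : ℂ) : ℂ :=
  1 / 2 + (Real.sqrt (2 * Real.pi))⁻¹ *
    ∑' n : ℕ, ((-1 : ℂ) ^ n / ((2 * n + 1) * 2 ^ n * n.factorial)) * z ^ (2 * n + 1)

/-!
Almost surely every `d + 1` of the points are affinely independent: by induction on the number of
points, since a new point avoids the proper affine span of the previous ones. In that general
position, the convex hull of `x₀, …, x_{d+1}` has `d + 1` vertices exactly when some `xᵢ` lies in
the convex hull of the others, and then the vertices are the remaining points, so that index `i`
is unique. Hence the probability is the sum over `i` of `P(Xᵢ ∈ [Xⱼ : j ≠ i])`, and by Fubini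
each summand is `E[μ([X₁, …, X_{d+1}])]`.
-/

open Set Module

section Convex

variable {𝕜 E : Type*} [Field 𝕜] [LinearOrder 𝕜] [IsStrictOrderedRing 𝕜] [AddCommGroup E]
  [Module 𝕜 E]

theorem mem_extremePoints_convexHull_iff {A : Set E} {y : E} (hy : y ∈ A) :
    y ∈ (convexHull 𝕜 A).extremePoints 𝕜 ↔ y ∉ convexHull 𝕜 (A \ {y}) := by
  refine ⟨fun h hmem => ?_, fun h => ?_⟩
  · exact ((convex_convexHull 𝕜 A).mem_extremePoints_iff_mem_sdiff_convexHull_sdiff.1 h).2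
      (convexHull_mono (sdiff_subset_sdiff_left (subset_convexHull 𝕜 A)) hmem)
  refine mem_extremePoints_iff_left.2 ⟨subset_convexHull 𝕜 A hy, fun a ha b hb hyab => ?_⟩
  rcases (A \ {y}).eq_empty_or_nonempty with hempty | hne
  · have := convexHull_mono (𝕜 := 𝕜) (sdiff_eq_empty.1 hempty) ha
    rwa [convexHull_singleton] at this
  rw [← insert_eq_of_mem hy, ← insert_sdiff_singleton, convexHull_insert hne] at ha hb
  obtain ⟨_, hy₁, k₁, hk₁, hak₁⟩ := mem_convexJoin.1 ha
  obtain ⟨_, hy₂, k₂, hk₂, hbk₂⟩ := mem_convexJoin.1 hb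
  rw [mem_singleton_iff.1 hy₁] at hak₁
  rw [mem_singleton_iff.1 hy₂] at hbk₂
  obtain ⟨s₁, t₁, hs₁, ht₁, hst₁, rfl⟩ := hak₁
  obtain ⟨s₂, t₂, hs₂, ht₂, hst₂, rfl⟩ := hbk₂
  obtain ⟨α, β, hα, hβ, hαβ, hy⟩ := hyab
  -- `a = s₁ y + t₁ k₁` and `b = s₂ y + t₂ k₂` with `kᵢ ∈ conv (A \ {y})`; if `t₁ > 0`, solving
  -- `y = α a + β b` for `y` puts `y` in `conv (A \ {y})`.
  rcases (show 0 ≤ α * t₁ by positivity).eq_or_lt with h₁ | h₁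
  · have : t₁ = 0 := by simpa [hα.ne'] using h₁.symm
    simp [this, show s₁ = 1 by linarith]
  obtain rfl : s₁ = 1 - t₁ := by linarith
  obtain rfl : s₂ = 1 - t₂ := by linarith
  obtain rfl : β = 1 - α := by linarith
  set c := α * t₁ + (1 - α) * t₂
  have hc : 0 < c := by positivity
  have key : c • y = (α * t₁) • k₁ + ((1 - α) * t₂) • k₂ := by
    linear_combination (norm := module) -hy
  have hy' : y = (α * t₁ / c) • k₁ + ((1 - α) * t₂ / c) • k₂ := by
    rw [div_eq_inv_mul, div_eq_inv_mul, mul_smul _ (α * t₁), mul_smul _ ((1 - α) * t₂),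
      ← smul_add, ← key, smul_smul, inv_mul_cancel₀ hc.ne', one_smul]
  have hmem : (α * t₁ / c) • k₁ + ((1 - α) * t₂ / c) • k₂ ∈ convexHull 𝕜 (A \ {y}) :=
    convex_convexHull 𝕜 _ hk₁ hk₂ (by positivity) (by positivity)
      (by rw [← add_div, div_self hc.ne'])
  rw [← hy'] at hmem
  exact absurd hmem h

theorem extremePoints_convexHull_range {ι : Type*} {x : ι → E} (hx : Function.Injective x) :
    (convexHull 𝕜 (range x)).extremePoints 𝕜 = x '' {i | x i ∉ convexHull 𝕜 (x '' {i}ᶜ)} := by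
  have hdiff : ∀ i, range x \ {x i} = x '' {i}ᶜ := fun i => by
    rw [← image_univ, ← image_singleton, ← image_sdiff hx, compl_eq_univ_sdiff]
  ext y
  constructor
  · intro hy
    obtain ⟨i, rfl⟩ := extremePoints_convexHull_subset hy
    refine ⟨i, fun hi => ?_, rfl⟩
    exact (mem_extremePoints_convexHull_iff (mem_range_self i)).1 hy (by rwa [hdiff])
  · rintro ⟨i, hi, rfl⟩
    rwa [mem_extremePoints_convexHull_iff (mem_range_self i), hdiff]

theorem AffineIndependent.extremePoints_convexHull_range {ι : Type*} {x : ι → E}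
    (hx : AffineIndependent 𝕜 x) : (convexHull 𝕜 (range x)).extremePoints 𝕜 = range x := by
  rw [_root_.extremePoints_convexHull_range hx.injective, ← image_univ]
  congr 1
  refine eq_univ_of_forall fun i hi => hx.notMem_affineSpan_sdiff i univ ?_
  rw [← compl_eq_univ_sdiff]
  exact convexHull_subset_affineSpan _ hi

theorem convexHull_range_eq_image_stdSimplex {ι : Type*} [Fintype ι] (v : ι → E) :
    convexHull 𝕜 (range v) = (fun w => ∑ i, w i • v i) '' stdSimplex 𝕜 ι := by
  classical
  have : (fun w : ι → 𝕜 => ∑ i, w i • v i) = Fintype.linearCombination 𝕜 v :=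
    funext fun w => (Fintype.linearCombination_apply 𝕜 v w).symm
  rw [← convexHull_rangle_single_eq_stdSimplex, this, LinearMap.image_convexHull, ← range_comp]
  congr
  funext i
  simp [Fintype.linearCombination_apply_single]

end Convex

theorem affineSpan_range_ne_top {k V ι : Type*} [DivisionRing k] [AddCommGroup V] [Module k V]
    [Fintype ι] (p : ι → V) (h : Fintype.card ι ≤ finrank k V) : affineSpan k (range p) ≠ ⊤ := by
  intro htop
  rcases isEmpty_or_nonempty ι with _ | _
  · simp [range_eq_empty] at htop
  have hpos := Fintype.card_pos (α := ι)
  have hfin := finrank_vectorSpan_range_le k p (n := Fintype.card ι - 1) (by omega)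
  rw [← direction_affineSpan, htop, AffineSubspace.direction_top, finrank_top] at hfin
  omega

theorem AffineIndependent.insertNth {k V : Type*} [DivisionRing k] [AddCommGroup V] [Module k V]
    {n : ℕ} {r : Fin n → V} (hr : AffineIndependent k r) {y : V}
    (hy : y ∉ affineSpan k (range r)) (i : Fin (n + 1)) :
    AffineIndependent k (Fin.insertNth i y r) := by
  refine affineIndependent_of_notMem_span (k := k) (p := Fin.insertNth i y r) (i := i) ?_ ?_
  · have : (fun j : {j // j ≠ i} => (Fin.insertNth i y r : Fin (n + 1) → V) j) =
        r ∘ (finSuccAboveEquiv i).symm := by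
      funext j
      obtain ⟨j, rfl⟩ := (finSuccAboveEquiv i).surjective j
      simp [finSuccAboveEquiv]
    rw [this]
    exact (affineIndependent_equiv _).2 hr
  · have : {j | j ≠ i} = range i.succAbove := (Fin.range_succAbove i).symm
    rwa [Fin.insertNth_apply_same, this, ← range_comp, Fin.insertNth_comp_succAbove]

theorem injective_of_affineIndependent_comp_succAbove {k V : Type*} [Ring k] [Nontrivial k]
    [AddCommGroup V] [Module k V] {n : ℕ} {x : Fin (n + 2) → V} (hn : 1 ≤ n)
    (hx : ∀ i : Fin (n + 2), AffineIndependent k (x ∘ i.succAbove)) : Function.Injective x := by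
  intro i j hij
  by_contra hne
  obtain ⟨l, hli, hlj⟩ := Fin.exists_ne_and_ne_of_two_lt i j (by lia)
  obtain ⟨i', rfl⟩ := Fin.exists_succAbove_eq hli.symm
  obtain ⟨j', rfl⟩ := Fin.exists_succAbove_eq hlj.symm
  exact hne (congrArg l.succAbove ((hx l).injective (by simpa using hij)))

theorem range_comp_succAbove {α : Type*} {n : ℕ} (x : Fin (n + 1) → α) (i : Fin (n + 1)) :
    range (x ∘ i.succAbove) = x '' {i}ᶜ := by
  rw [range_comp, Fin.range_succAbove]

section GeneralPosition

variable {𝕜 E : Type*} [Field 𝕜] [LinearOrder 𝕜] [IsStrictOrderedRing 𝕜] [AddCommGroup E]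
  [Module 𝕜 E] {n : ℕ} {x : Fin (n + 2) → E}

theorem extremePoints_convexHull_range_of_mem_convexHull {i : Fin (n + 2)}
    (hxi : AffineIndependent 𝕜 (x ∘ i.succAbove)) (hi : x i ∈ convexHull 𝕜 (x '' {i}ᶜ)) :
    (convexHull 𝕜 (range x)).extremePoints 𝕜 = range (x ∘ i.succAbove) := by
  have hrange : range x = insert (x i) (range (x ∘ i.succAbove)) := by
    rw [range_comp_succAbove, ← image_insert_eq, insert_eq, union_compl_self, image_univ]
  rw [← range_comp_succAbove] at hi
  have hhull : convexHull 𝕜 (range x) = convexHull 𝕜 (range (x ∘ i.succAbove)) := by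
    rw [hrange]
    exact (convexHull_min (insert_subset hi (subset_convexHull 𝕜 _))
      (convex_convexHull 𝕜 _)).antisymm (convexHull_mono (subset_insert _ _))
  rw [hhull, hxi.extremePoints_convexHull_range]

theorem eq_of_mem_convexHull_image_compl (hn : 1 ≤ n)
    (hx : ∀ i : Fin (n + 2), AffineIndependent 𝕜 (x ∘ i.succAbove)) {i j : Fin (n + 2)}
    (hi : x i ∈ convexHull 𝕜 (x '' {i}ᶜ)) (hj : x j ∈ convexHull 𝕜 (x '' {j}ᶜ)) : i = j := by
  have h := (extremePoints_convexHull_range_of_mem_convexHull (hx i) hi).symm.trans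
    (extremePoints_convexHull_range_of_mem_convexHull (hx j) hj)
  rw [range_comp_succAbove, range_comp_succAbove,
    (injective_of_affineIndependent_comp_succAbove hn hx).image_injective.eq_iff] at h
  simpa using h

end GeneralPosition

theorem ncard_extremePoints_eq_iff_simplexEvent {d : ℕ} (hd : 1 ≤ d) {x : Fin (d + 2) → E d}
    (hx : ∀ i : Fin (d + 2), AffineIndependent ℝ (x ∘ i.succAbove)) :
    ((convexHull ℝ (range x)).extremePoints ℝ).ncard = d + 1 ↔ simplexEvent x := by
  have hinj := injective_of_affineIndependent_comp_succAbove hd hx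
  constructor
  · intro h
    by_contra hnone
    have : {i | x i ∉ convexHull ℝ (x '' {i}ᶜ)} = univ :=
      eq_univ_of_forall fun i hi => hnone ⟨i, hi⟩
    rw [extremePoints_convexHull_range hinj, this, image_univ, ncard_range_of_injective hinj]
      at h
    simp at h
  · rintro ⟨i, hi⟩
    rw [extremePoints_convexHull_range_of_mem_convexHull (hx i) hi,
      ncard_range_of_injective (hinj.comp Fin.succAbove_right_injective)]
    simp

theorem setOf_mem_convexHull_image_compl_eq_preimage {V : Type*} [AddCommGroup V] [Module ℝ V]
    [MeasurableSpace V] {n : ℕ} (i : Fin (n + 1)) :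
    {x : Fin (n + 1) → V | x i ∈ convexHull ℝ (x '' {i}ᶜ)} =
      MeasurableEquiv.piFinSuccAbove (fun _ => V) i ⁻¹'
        {q : V × (Fin n → V) | q.1 ∈ convexHull ℝ (range q.2)} := by
  ext x
  simp only [mem_ofPred_eq, mem_preimage]
  rw [← range_comp_succAbove]
  rfl

section Measure

variable {V : Type*} [NormedAddCommGroup V] [NormedSpace ℝ V] [FiniteDimensional ℝ V]
  [MeasurableSpace V] [BorelSpace V]

theorem measurableSet_setOf_mem_convexHull_range {ι : Type*} [Fintype ι] :
    MeasurableSet {q : V × (ι → V) | q.1 ∈ convexHull ℝ (range q.2)} := by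
  have hrange : {q : V × (ι → V) | q.1 ∈ convexHull ℝ (range q.2)} =
      range fun q : stdSimplex ℝ ι × (ι → V) => (∑ i, q.1.1 i • q.2 i, q.2) := by
    ext ⟨y, r⟩
    simp [convexHull_range_eq_image_stdSimplex]
  have : CompactSpace (stdSimplex ℝ ι) := isCompact_iff_compactSpace.1 (isCompact_stdSimplex ℝ ι)
  obtain ⟨K, hK, hKU⟩ := isSigmaCompact_range
    (f := fun q : stdSimplex ℝ ι × (ι → V) => (∑ i, q.1.1 i • q.2 i, q.2))
    ((continuous_finsetSum _ fun i _ => ((continuous_apply i).comp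
      (continuous_subtype_val.comp continuous_fst)).smul ((continuous_apply i).comp
        continuous_snd)).prodMk continuous_snd)
  rw [hrange, ← hKU]
  exact .iUnion fun m => (hK m).isClosed.measurableSet

theorem ae_affineIndependent (μ : Measure V) [SigmaFinite μ]
    (hμ : ∀ s : AffineSubspace ℝ V, s ≠ ⊤ → μ s = 0) {n : ℕ} (hn : n ≤ finrank ℝ V + 1) :
    ∀ᵐ x ∂(Measure.pi fun _ : Fin n => μ), AffineIndependent ℝ x := by
  induction n with
  | zero => exact ae_of_all _ fun x => affineIndependent_of_subsingleton ℝ x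
  | succ n ih =>
    let e := MeasurableEquiv.piFinSuccAbove (fun _ : Fin (n + 1) => V) 0
    let S := {q : V × (Fin n → V) | ¬AffineIndependent ℝ (e.symm q)}
    have hS : MeasurableSet S :=
      (isOpen_setOfPred_affineIndependent (𝕜 := ℝ)).measurableSet.compl.preimage e.symm.measurable
    rw [ae_iff, show {x | ¬AffineIndependent ℝ x} = e ⁻¹' S by ext; simp [S],
      (measurePreserving_piFinSuccAbove (fun _ => μ) 0).measure_preimage_equiv,
      Measure.prod_apply_symm hS]
    refine (lintegral_congr_ae ?_).trans lintegral_zero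
    filter_upwards [ih (by omega)] with r hr
    refine measure_mono_null (fun y hy => ?_) 
      (hμ _ (affineSpan_range_ne_top r (by rw [Fintype.card_fin]; omega)))
    by_contra hyr
    exact hy (hr.insertNth hyr 0)

theorem ae_forall_affineIndependent_comp_succAbove (μ : Measure V) [SigmaFinite μ]
    (hμ : ∀ s : AffineSubspace ℝ V, s ≠ ⊤ → μ s = 0) {n : ℕ} (hn : n ≤ finrank ℝ V + 1) :
    ∀ᵐ x ∂(Measure.pi fun _ : Fin (n + 1) => μ),
      ∀ i : Fin (n + 1), AffineIndependent ℝ (x ∘ i.succAbove) := by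
  rw [ae_all_iff]
  intro i
  rw [ae_iff, show {x : Fin (n + 1) → V | ¬AffineIndependent ℝ (x ∘ i.succAbove)} =
      MeasurableEquiv.piFinSuccAbove (fun _ => V) i ⁻¹' (univ ×ˢ {r | ¬AffineIndependent ℝ r})
      by ext; simp; rfl,
    (measurePreserving_piFinSuccAbove (fun _ => μ) i).measure_preimage_equiv, Measure.prod_prod,
    ae_iff.1 (ae_affineIndependent μ hμ hn), mul_zero]

theorem pi_setOf_mem_convexHull_image_compl (μ : Measure V) [SigmaFinite μ] {n : ℕ}
    (i : Fin (n + 1)) :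
    Measure.pi (fun _ => μ) {x : Fin (n + 1) → V | x i ∈ convexHull ℝ (x '' {i}ᶜ)} =
      ∫⁻ r, μ (convexHull ℝ (range r)) ∂Measure.pi fun _ : Fin n => μ := by
  rw [setOf_mem_convexHull_image_compl_eq_preimage,
    (measurePreserving_piFinSuccAbove (fun _ => μ) i).measure_preimage_equiv,
    Measure.prod_apply_symm measurableSet_setOf_mem_convexHull_range]
  rfl

theorem measurableSet_setOf_mem_convexHull_image_compl {n : ℕ} (i : Fin (n + 1)) :
    MeasurableSet {x : Fin (n + 1) → V | x i ∈ convexHull ℝ (x '' {i}ᶜ)} := by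
  rw [setOf_mem_convexHull_image_compl_eq_preimage]
  exact measurableSet_setOf_mem_convexHull_range.preimage (MeasurableEquiv.measurable _)

end Measure

/-- Sylvester's probability as an expectation: for `d+2` i.i.d. points with an absolutely
continuous distribution `μ` on `ℝ^d`, the probability that the convex hull is a simplex
(i.e. has exactly `d+1` vertices) equals `(d+2)·E[μ([X_1,…,X_{d+1}])]`. -/
theorem sylvester_as_expectation (d : ℕ) (hd : 1 ≤ d) (μ : Measure (E d))
    [IsProbabilityMeasure μ] (hμ : μ ≪ volume) :
    ((Measure.pi fun _ : Fin (d + 2) => μ)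
        {x | (Set.extremePoints ℝ (convexHull ℝ (Set.range x))).ncard = d + 1}).toReal
      = (d + 2) * ∫ x : Fin (d + 1) → E d,
          (μ (convexHull ℝ (Set.range x))).toReal ∂(Measure.pi fun _ : Fin (d + 1) => μ) := by
  set ν := Measure.pi fun _ : Fin (d + 2) => μ
  let B (i : Fin (d + 2)) := {x : Fin (d + 2) → E d | x i ∈ convexHull ℝ (x '' {i}ᶜ)}
  have hgen := ae_forall_affineIndependent_comp_succAbove μ
    (fun s hs => hμ (Measure.addHaar_affineSubspace volume s hs)) (n := d + 1)
    (by rw [finrank_euclideanSpace_fin])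
  have hevent : {x | (Set.extremePoints ℝ (convexHull ℝ (Set.range x))).ncard = d + 1}
      =ᵐ[ν] ⋃ i, B i := by
    rw [Filter.eventuallyEq_set]
    filter_upwards [hgen] with x hx
    simpa [B, simplexEvent] using ncard_extremePoints_eq_iff_simplexEvent hd hx
  have hdisj : Pairwise (Function.onFun (AEDisjoint ν) B) := fun i j hij =>
    measure_mono_null (fun x hx hgx => hij (eq_of_mem_convexHull_image_compl hd hgx hx.1 hx.2))
      (ae_iff.1 hgen)
  have hB : ∀ i, NullMeasurableSet (B i) ν := fun i =>
    (measurableSet_setOf_mem_convexHull_image_compl i).nullMeasurableSet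
  have hint : Measurable fun r : Fin (d + 1) → E d => μ (convexHull ℝ (range r)) :=
    measurable_measure_prodMk_right measurableSet_setOf_mem_convexHull_range
  rw [measure_congr hevent, measure_iUnion₀ hdisj hB, tsum_fintype,
    integral_toReal hint.aemeasurable (ae_of_all _ fun r => measure_lt_top μ _)]
  simp [B, ν, pi_setOf_mem_convexHull_image_compl, ENNReal.toReal_mul, ENNReal.toReal_add]
end
end

section
/- Orthogonal projection of the beta prime distribution: if $Y$ is a random point in $\mathbb{R}^{d+1}$ with density proportional to $(1+\|y\|^2)^{-(\beta+1/2)}$ (where $\beta>d/2$), and $H\subset\mathbb{R}^{d+1}$ is any linear hyperplane, then $\Pi_H(Y)$ has the $d$-dimensional beta prime distribution on $H$ with density proportional to $(1+\|x\|^2)^{-\beta}$. -/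
open MeasureTheory Metric

noncomputable section

set_option synthInstance.maxHeartbeats 400000
set_option maxHeartbeats 1000000

/-!
Splitting `ℝ^{d+1} = H ⊕ Hᗮ` isometrically splits Lebesgue measure as a product, and the beta
prime density only depends on `‖y‖² = ‖x‖² + t²` with `x ∈ H`, `t` the coordinate along the unit
normal. So the projection has density `x ↦ ∫ c (1 + ‖x‖² + t²)^{-(β+1/2)} dt`. Writing
`Γ(a) (b + t²)^{-a} = ∫₀^∞ u^{a-1} e^{-(b+t²)u} du` and doing the Gaussian integral in `t` first
gives `∫ (b + t²)^{-a} dt = √π Γ(a-1/2) / Γ(a) · b^{1/2-a}`, which turns the normalising constant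
of `μ̃_{d+1,β+1/2}` into that of `μ̃_{d,β}`. Since the density is radial, transporting along the
isometry `e` does not change it.
-/

open Real Set
open scoped ENNReal

section MeasureLemmas

variable {α γ : Type*} [MeasurableSpace α] [MeasurableSpace γ]

theorem MeasureTheory.MeasurePreserving.map_withDensity_comp {μ : Measure α} {ν : Measure γ}
    {T : α → γ} (hT : MeasurePreserving T μ ν) (hTe : MeasurableEmbedding T) (f : γ → ℝ≥0∞) :
    (μ.withDensity (f ∘ T)).map T = ν.withDensity f := by
  ext s hs
  rw [Measure.map_apply hT.measurable hs, withDensity_apply _ (hT.measurable hs),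
    withDensity_apply _ hs]
  exact hT.setLIntegral_comp_preimage_emb hTe f s

theorem MeasureTheory.Measure.map_fst_prod_withDensity (μ : Measure α) (ν : Measure γ)
    [SFinite μ] [SFinite ν] {f : α × γ → ℝ≥0∞} (hf : Measurable f) :
    ((μ.prod ν).withDensity f).map Prod.fst = μ.withDensity fun x => ∫⁻ y, f (x, y) ∂ν := by
  ext s hs
  rw [Measure.map_apply measurable_fst hs, withDensity_apply _ (measurable_fst hs),
    withDensity_apply _ hs, ← Set.prod_univ, ← Measure.prod_restrict, Measure.restrict_univ,
    lintegral_prod _ hf.aemeasurable]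

end MeasureLemmas

section Radial

variable {F G : Type*} [NormedAddCommGroup F] [InnerProductSpace ℝ F] [FiniteDimensional ℝ F]
  [MeasurableSpace F] [BorelSpace F]
  [NormedAddCommGroup G] [InnerProductSpace ℝ G] [FiniteDimensional ℝ G]
  [MeasurableSpace G] [BorelSpace G]

theorem LinearIsometryEquiv.map_volume_withDensity_norm_sq (e : F ≃ₗᵢ[ℝ] G) (g : ℝ → ℝ≥0∞) :
    (volume.withDensity fun x : F => g (‖x‖ ^ 2)).map e
      = volume.withDensity fun x : G => g (‖x‖ ^ 2) := by
  have h := e.measurePreserving.map_withDensity_comp e.toHomeomorph.measurableEmbedding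
    fun x : G => g (‖x‖ ^ 2)
  simpa [Function.comp_def] using h

theorem lintegral_norm_sq_of_finrank_eq_one (h : Module.finrank ℝ F = 1) {g : ℝ → ℝ≥0∞}
    (hg : Measurable g) : ∫⁻ z : F, g (‖z‖ ^ 2) = ∫⁻ t : ℝ, g (t ^ 2) := by
  have : Nontrivial F := Module.nontrivial_of_finrank_eq_succ h
  obtain ⟨v, hv⟩ := exists_norm_eq F zero_le_one
  rw [volume_eq_of_finrank_eq_one h (norm_ne_zero_iff.mp (hv.symm ▸ one_ne_zero)),
    lintegral_smul_measure, lintegral_map (by fun_prop) (by fun_prop)]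
  simp [norm_smul, hv, ← ofReal_norm]

theorem Submodule.map_orthogonalProjectionOnto_volume_withDensity (K : Submodule ℝ F)
    {g : ℝ → ℝ≥0∞} (hg : Measurable g) :
    (volume.withDensity fun y : F => g (‖y‖ ^ 2)).map K.orthogonalProjectionOnto
      = volume.withDensity fun x : K => ∫⁻ z : Kᗮ, g (‖x‖ ^ 2 + ‖z‖ ^ 2) := by
  let T : F ≃ᵐ K × Kᗮ :=
    K.orthogonalDecomposition.toMeasurableEquiv.trans (MeasurableEquiv.toLp 2 (K × Kᗮ)).symm
  have hT : MeasurePreserving T :=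
    (WithLp.volume_preserving_ofLp K Kᗮ).comp K.orthogonalDecomposition.measurePreserving
  have hdens : (fun y : F => g (‖y‖ ^ 2)) = (fun p : K × Kᗮ => g (‖p.1‖ ^ 2 + ‖p.2‖ ^ 2)) ∘ T := by
    funext y
    simp [T, K.norm_sq_eq_add_norm_sq_projection y]
  have hproj : (K.orthogonalProjectionOnto : F → K) = Prod.fst ∘ T := by
    funext y
    simp [T]
  rw [hproj, hdens, ← Measure.map_map measurable_fst hT.measurable,
    hT.map_withDensity_comp T.measurableEmbedding, Measure.volume_eq_prod,
    Measure.map_fst_prod_withDensity _ _ (by fun_prop)]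

end Radial

section GammaIntegrals

theorem ofReal_rpow_neg_mul_Gamma {a r : ℝ} (ha : 0 < a) (hr : 0 < r) :
    ENNReal.ofReal (r ^ (-a) * Gamma a)
      = ∫⁻ u in Ioi (0 : ℝ), ENNReal.ofReal (u ^ (a - 1) * exp (-(r * u))) := by
  have hint : IntegrableOn (fun u : ℝ => u ^ (a - 1) * exp (-(r * u))) (Ioi 0) := by
    simpa [rpow_one, neg_mul] using
      integrableOn_rpow_mul_exp_neg_mul_rpow (by linarith : (-1 : ℝ) < a - 1) zero_lt_one hr
  rw [← ofReal_integral_eq_lintegral_ofReal hint, integral_rpow_mul_exp_neg_mul_Ioi ha hr,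
    one_div, rpow_neg hr.le, inv_rpow hr.le]
  filter_upwards [ae_restrict_mem measurableSet_Ioi] with u (hu : 0 < u)
  positivity

theorem lintegral_exp_neg_mul_sq {u : ℝ} (hu : 0 < u) :
    ∫⁻ t : ℝ, ENNReal.ofReal (exp (-(u * t ^ 2))) = ENNReal.ofReal (√π * u ^ (-(1 / 2) : ℝ)) := by
  rw [← ofReal_integral_eq_lintegral_ofReal (by simpa [neg_mul] using integrable_exp_neg_mul_sq hu)
      (ae_of_all _ fun t => (exp_pos _).le)]
  simp_rw [← neg_mul, integral_gaussian, sqrt_div pi_pos.le, sqrt_eq_rpow, rpow_neg hu.le,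
    div_eq_mul_inv]

theorem lintegral_add_sq_rpow_neg {a b : ℝ} (ha : 1 / 2 < a) (hb : 0 < b) :
    ∫⁻ t : ℝ, ENNReal.ofReal ((b + t ^ 2) ^ (-a))
      = ENNReal.ofReal (√π * Gamma (a - 1 / 2) / Gamma a * b ^ (1 / 2 - a)) := by
  have hGa : 0 < Gamma a := Gamma_pos_of_pos (by linarith)
  have hfiber : ∀ u > (0 : ℝ), ∫⁻ t : ℝ, ENNReal.ofReal (u ^ (a - 1) * exp (-((b + t ^ 2) * u)))
      = ENNReal.ofReal (√π) * ENNReal.ofReal (u ^ (a - 1 / 2 - 1) * exp (-(b * u))) := by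
    intro u hu
    have hsplit : ∀ t : ℝ, ENNReal.ofReal (u ^ (a - 1) * exp (-((b + t ^ 2) * u)))
        = ENNReal.ofReal (u ^ (a - 1) * exp (-(b * u))) * ENNReal.ofReal (exp (-(u * t ^ 2))) := by
      intro t
      rw [← ENNReal.ofReal_mul (by positivity), mul_assoc, ← exp_add]
      ring_nf
    simp_rw [hsplit]
    rw [lintegral_const_mul' _ _ ENNReal.ofReal_ne_top, lintegral_exp_neg_mul_sq hu,
      ← ENNReal.ofReal_mul (by positivity), ← ENNReal.ofReal_mul (sqrt_nonneg _),
      show a - 1 / 2 - 1 = (a - 1) + (-(1 / 2)) by ring, rpow_add hu]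
    ring_nf
  have key : ENNReal.ofReal (Gamma a) * ∫⁻ t : ℝ, ENNReal.ofReal ((b + t ^ 2) ^ (-a))
      = ENNReal.ofReal (√π) * ENNReal.ofReal (b ^ (-(a - 1 / 2)) * Gamma (a - 1 / 2)) :=
    calc _ = ∫⁻ t : ℝ, ∫⁻ u in Ioi (0 : ℝ),
          ENNReal.ofReal (u ^ (a - 1) * exp (-((b + t ^ 2) * u))) := by
          rw [← lintegral_const_mul' _ _ ENNReal.ofReal_ne_top]
          congr with t
          rw [← ENNReal.ofReal_mul hGa.le, mul_comm]
          exact ofReal_rpow_neg_mul_Gamma (by linarith) (by positivity)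
      _ = ∫⁻ u in Ioi (0 : ℝ), ∫⁻ t : ℝ,
          ENNReal.ofReal (u ^ (a - 1) * exp (-((b + t ^ 2) * u))) :=
          lintegral_lintegral_swap (by fun_prop)
      _ = ∫⁻ u in Ioi (0 : ℝ), ENNReal.ofReal (√π) *
          ENNReal.ofReal (u ^ (a - 1 / 2 - 1) * exp (-(b * u))) :=
          setLIntegral_congr_fun measurableSet_Ioi hfiber
      _ = _ := by
          rw [lintegral_const_mul' _ _ ENNReal.ofReal_ne_top,
            ← ofReal_rpow_neg_mul_Gamma (by linarith) hb]
  rw [← ENNReal.mul_right_inj (ENNReal.ofReal_pos.2 hGa).ne' ENNReal.ofReal_ne_top, key,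
    ← ENNReal.ofReal_mul (sqrt_nonneg _), ← ENNReal.ofReal_mul hGa.le,
    show 1 / 2 - a = -(a - 1 / 2) by ring]
  congr 1
  field_simp

end GammaIntegrals

section BetaPrime

def betaPrimeProfile (d : ℕ) (β s : ℝ) : ℝ≥0∞ :=
  ENNReal.ofReal ((Gamma β / (π ^ ((d : ℝ) / 2) * Gamma (β - d / 2))) * (1 + s) ^ (-β))

theorem betaPrimeM_eq_withDensity_profile (d : ℕ) (β : ℝ) :
    betaPrimeM d β = volume.withDensity fun x => betaPrimeProfile d β (‖x‖ ^ 2) := rfl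

theorem measurable_betaPrimeProfile (d : ℕ) (β : ℝ) : Measurable (betaPrimeProfile d β) := by
  unfold betaPrimeProfile
  fun_prop

theorem lintegral_betaPrimeProfile_add_sq {d : ℕ} {β s : ℝ} (hβ : (d : ℝ) / 2 < β) (hs : 0 ≤ s) :
    ∫⁻ t : ℝ, betaPrimeProfile (d + 1) (β + 1 / 2) (s + t ^ 2) = betaPrimeProfile d β s := by
  have hβ0 : 0 < β := lt_of_le_of_lt (by positivity) hβ
  have hshift : β + 1 / 2 - ((d + 1 : ℕ) : ℝ) / 2 = β - d / 2 := by push_cast; ring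
  have hsplit : ∀ t : ℝ, betaPrimeProfile (d + 1) (β + 1 / 2) (s + t ^ 2)
      = ENNReal.ofReal (Gamma (β + 1 / 2) / (π ^ (((d + 1 : ℕ) : ℝ) / 2) * Gamma (β - d / 2)))
        * ENNReal.ofReal ((1 + s + t ^ 2) ^ (-(β + 1 / 2))) := fun t => by
    rw [betaPrimeProfile, hshift, ENNReal.ofReal_mul (by positivity), add_assoc]
  simp_rw [hsplit]
  rw [lintegral_const_mul' _ _ ENNReal.ofReal_ne_top,
    lintegral_add_sq_rpow_neg (by linarith) (by positivity), ← ENNReal.ofReal_mul (by positivity),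
    betaPrimeProfile]
  congr 1
  have hπ : π ^ (((d + 1 : ℕ) : ℝ) / 2) = π ^ ((d : ℝ) / 2) * √π := by
    rw [sqrt_eq_rpow, ← rpow_add pi_pos]
    push_cast
    ring_nf
  rw [hπ, add_sub_cancel_right, show 1 / 2 - (β + 1 / 2) = -β by ring]
  field_simp

end BetaPrime

theorem beta_prime_projection_general (d : ℕ) (β : ℝ) (hβ : (d : ℝ) / 2 < β)
    (H : Submodule ℝ (E (d + 1))) (e : H ≃ₗᵢ[ℝ] E d) :
    Measure.map (fun y => e (H.orthogonalProjectionOnto y)) (betaPrimeM (d + 1) (β + 1 / 2))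
      = betaPrimeM d β := by
  have hHperp : Module.finrank ℝ Hᗮ = 1 := by
    have := H.finrank_add_finrank_orthogonal
    rw [e.toLinearEquiv.finrank_eq, finrank_euclideanSpace_fin, finrank_euclideanSpace_fin] at this
    omega
  have hmarginal : (volume.withDensity fun x : H =>
      ∫⁻ z : Hᗮ, betaPrimeProfile (d + 1) (β + 1 / 2) (‖x‖ ^ 2 + ‖z‖ ^ 2))
      = volume.withDensity fun x : H => betaPrimeProfile d β (‖x‖ ^ 2) := by
    congr with x
    rw [lintegral_norm_sq_of_finrank_eq_one hHperp
        (g := fun r => betaPrimeProfile (d + 1) (β + 1 / 2) (‖x‖ ^ 2 + r))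
        ((measurable_betaPrimeProfile _ _).comp (measurable_const_add _)),
      lintegral_betaPrimeProfile_add_sq hβ (by positivity)]
  change Measure.map (e ∘ H.orthogonalProjectionOnto) _ = _
  rw [betaPrimeM_eq_withDensity_profile, betaPrimeM_eq_withDensity_profile,
    ← Measure.map_map e.continuous.measurable H.orthogonalProjectionOnto.continuous.measurable,
    H.map_orthogonalProjectionOnto_volume_withDensity (measurable_betaPrimeProfile _ _),
    hmarginal, e.map_volume_withDensity_norm_sq]

/-- Projection property of beta prime distributions: if `Y` in `ℝ^{d+1}` has the beta
prime distribution with parameter `β + 1/2` (β > d/2), then for any linear hyperplane `H`,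
the orthogonal projection of `Y` onto `H` has the `d`-dimensional beta prime distribution
`μ̃_{d,β}` on `H` (identified with `ℝ^d` via any linear isometry). -/
theorem beta_prime_projection (d : ℕ) (β : ℝ) (hβ : (d : ℝ) / 2 < β)
    (H : Submodule ℝ (E (d + 1))) (hH : Module.finrank ℝ H = d) (e : H ≃ₗᵢ[ℝ] E d) :
    Measure.map (fun y => e (H.orthogonalProjectionOnto y)) (betaPrimeM (d + 1) (β + 1 / 2))
      = betaPrimeM d β :=
  beta_prime_projection_general d β hβ H e
end
end
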